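/- arXiv:2002.00804 — 6 statements merged into one kernel-verified Lean document; each statement's English description precedes it below -/
import Mathlib

section
/- Let V be a topological vector space, F : V → [0,∞] continuous and convex, (x_i)_{i=1}^N elements of V, (ε_i) i.i.d. real symmetric random variables, and (α_i) real numbers in [-1,1]. Then E[F(∑_i α_i ε_i x_i)] ≤ E[F(∑_i ε_i x_i)]. -/
open MeasureTheory ProbabilityTheory

/-!
For `|α i| ≤ 1`, the vector `α` is the mean of a product of two-point laws on sign patterns
`s ∈ {±1}^N`, the coordinate `i` taking the value `±1` with probability `(1 ± α i) / 2`.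
Hence `∑ α i ε i x i` is a convex combination of the vectors `∑ s i ε i x i`, and convexity bounds
`F` of it by the same convex combination of `F (∑ s i ε i x i)`. By independence and symmetry
every sign pattern leaves the joint law of `(ε i)` unchanged, so each of these has expectation
`E[F (∑ ε i x i)]`.
-/

open Finset
open scoped ENNReal

theorem map_sum_le_of_convex {V : Type*} [AddCommGroup V] [Module ℝ V] {F : V → ℝ≥0∞}
    (hF : ∀ x y : V, ∀ a b : ℝ, 0 ≤ a → 0 ≤ b → a + b = 1 →
      F (a • x + b • y) ≤ ENNReal.ofReal a * F x + ENNReal.ofReal b * F y)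
    {ι : Type*} (s : Finset ι) (w : ι → ℝ) (v : ι → V)
    (hw₀ : ∀ i ∈ s, 0 ≤ w i) (hw₁ : ∑ i ∈ s, w i = 1) :
    F (∑ i ∈ s, w i • v i) ≤ ∑ i ∈ s, ENNReal.ofReal (w i) * F (v i) := by
  induction s using Finset.cons_induction generalizing w with
  | empty => simp at hw₁
  | cons a s ha ih =>
    rw [sum_cons] at hw₁
    rw [sum_cons, sum_cons]
    have hwa := hw₀ a (mem_cons_self a s)
    have hws : ∀ i ∈ s, 0 ≤ w i := fun i hi => hw₀ i (mem_cons_of_mem hi)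
    set c := ∑ i ∈ s, w i
    rcases (sum_nonneg hws).eq_or_lt with hc | hc
    · have hz : ∀ i ∈ s, w i = 0 := (sum_eq_zero_iff_of_nonneg hws).mp hc.symm
      have hwa₁ : w a = 1 := by linarith
      have hzero : ∑ i ∈ s, w i • v i = 0 := sum_eq_zero fun i hi => by rw [hz i hi, zero_smul]
      rw [hzero, hwa₁, one_smul, add_zero, ENNReal.ofReal_one, one_mul]
      exact le_self_add
    · have hsplit : ∑ i ∈ s, w i • v i = c • ∑ i ∈ s, (w i / c) • v i := by
        rw [smul_sum]
        exact sum_congr rfl fun i _ => by rw [smul_smul, mul_div_cancel₀ _ hc.ne']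
      have hih := ih (fun i => w i / c) (fun i hi => div_nonneg (hws i hi) hc.le)
        (by rw [← sum_div, div_self hc.ne'])
      calc F (w a • v a + ∑ i ∈ s, w i • v i)
          ≤ ENNReal.ofReal (w a) * F (v a)
            + ENNReal.ofReal c * F (∑ i ∈ s, (w i / c) • v i) := by
            rw [hsplit]; exact hF _ _ _ _ hwa hc.le hw₁
        _ ≤ ENNReal.ofReal (w a) * F (v a)
            + ENNReal.ofReal c * ∑ i ∈ s, ENNReal.ofReal (w i / c) * F (v i) := by gcongr
        _ = ENNReal.ofReal (w a) * F (v a) + ∑ i ∈ s, ENNReal.ofReal (w i) * F (v i) := by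
            rw [mul_sum]
            refine congrArg _ (sum_congr rfl fun i _ => ?_)
            rw [← mul_assoc, ← ENNReal.ofReal_mul hc.le, mul_div_cancel₀ _ hc.ne']

theorem Fintype.sum_prod_mul_apply {ι κ R : Type*} [Fintype ι] [DecidableEq ι] [Fintype κ]
    [CommSemiring R] (f : ι → κ → R) (hf : ∀ j, ∑ b, f j b = 1) (g : κ → R) (i : ι) :
    ∑ s : ι → κ, (∏ j, f j (s j)) * g (s i) = ∑ b, f i b * g b := by
  calc ∑ s : ι → κ, (∏ j, f j (s j)) * g (s i)
      = ∑ s : ι → κ, ∏ j, f j (s j) * if j = i then g (s j) else 1 := by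
        simp only [prod_mul_distrib, Fintype.prod_ite_eq']
    _ = ∏ j, ∑ b, f j b * if j = i then g b else 1 := by rw [Fintype.prod_sum]
    _ = ∏ j, if j = i then ∑ b, f i b * g b else 1 :=
        Fintype.prod_congr _ _ fun j => by split_ifs with h <;> simp [h, hf]
    _ = ∑ b, f i b * g b := Fintype.prod_ite_eq' i _

noncomputable def boolSign (b : Bool) : ℝ := if b then 1 else -1

noncomputable def signWeight (a : ℝ) (b : Bool) : ℝ := (1 + boolSign b * a) / 2

theorem signWeight_nonneg {a : ℝ} (ha : |a| ≤ 1) (b : Bool) : 0 ≤ signWeight a b := by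
  have := abs_le.mp ha
  cases b <;> simp only [signWeight, boolSign] <;> norm_num <;> linarith

theorem sum_signWeight (a : ℝ) : ∑ b, signWeight a b = 1 := by
  simp only [Fintype.sum_bool, signWeight, boolSign]; norm_num; ring

theorem sum_signWeight_mul_boolSign (a : ℝ) : ∑ b, signWeight a b * boolSign b = a := by
  simp only [Fintype.sum_bool, signWeight, boolSign]; norm_num; ring

section SignPatterns

variable {ι : Type*} [Fintype ι] [DecidableEq ι]

theorem sum_prod_signWeight (α : ι → ℝ) : ∑ s : ι → Bool, ∏ j, signWeight (α j) (s j) = 1 := by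
  rw [← Fintype.prod_sum]
  exact Fintype.prod_eq_one _ fun j => sum_signWeight (α j)

theorem sum_prod_signWeight_mul_boolSign (α : ι → ℝ) (i : ι) :
    ∑ s : ι → Bool, (∏ j, signWeight (α j) (s j)) * boolSign (s i) = α i := by
  rw [Fintype.sum_prod_mul_apply _ (fun j => sum_signWeight (α j)), sum_signWeight_mul_boolSign]

variable {V : Type*} [AddCommGroup V] [Module ℝ V]

theorem sum_mul_smul_eq_sum_signPatterns (α y : ι → ℝ) (x : ι → V) :
    ∑ i, (α i * y i) • x i
      = ∑ s : ι → Bool, (∏ j, signWeight (α j) (s j)) • ∑ i, (boolSign (s i) * y i) • x i := by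
  calc ∑ i, (α i * y i) • x i
      = ∑ i, ∑ s : ι → Bool, ((∏ j, signWeight (α j) (s j)) * boolSign (s i) * y i) • x i := by
        simp only [← sum_smul, ← sum_mul, sum_prod_signWeight_mul_boolSign]
    _ = _ := by
        rw [sum_comm]
        simp only [smul_sum, smul_smul, mul_assoc]

theorem apply_sum_mul_smul_le_sum_signPatterns {F : V → ℝ≥0∞}
    (hF : ∀ x y : V, ∀ a b : ℝ, 0 ≤ a → 0 ≤ b → a + b = 1 →
      F (a • x + b • y) ≤ ENNReal.ofReal a * F x + ENNReal.ofReal b * F y)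
    {α : ι → ℝ} (hα : ∀ i, |α i| ≤ 1) (y : ι → ℝ) (x : ι → V) :
    F (∑ i, (α i * y i) • x i)
      ≤ ∑ s : ι → Bool, ENNReal.ofReal (∏ j, signWeight (α j) (s j))
          * F (∑ i, (boolSign (s i) * y i) • x i) := by
  rw [sum_mul_smul_eq_sum_signPatterns]
  exact map_sum_le_of_convex hF _ _ _
    (fun s _ => prod_nonneg fun j _ => signWeight_nonneg (hα j) (s j)) (sum_prod_signWeight α)

end SignPatterns

theorem map_fun_eq_of_iIndepFun {Ω ι : Type*} [MeasurableSpace Ω] {μ : Measure Ω} [Fintype ι]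
    {β : ι → Type*} [∀ i, MeasurableSpace (β i)] {ε η : ∀ i, Ω → β i}
    (hε : ∀ i, Measurable (ε i)) (hη : ∀ i, Measurable (η i))
    (hεi : iIndepFun ε μ) (hηi : iIndepFun η μ) (h : ∀ i, μ.map (ε i) = μ.map (η i)) :
    μ.map (fun ω i => ε i ω) = μ.map (fun ω i => η i ω) := by
  rw [hεi.map_fun_eq_pi_map fun i => (hε i).aemeasurable,
    hηi.map_fun_eq_pi_map fun i => (hη i).aemeasurable]
  simp only [h]

theorem lintegral_boolSign_mul_eq {Ω ι : Type*} [MeasurableSpace Ω] {μ : Measure Ω} [Fintype ι]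
    {ε : ι → Ω → ℝ} (hmeas : ∀ i, Measurable (ε i)) (hindep : iIndepFun ε μ)
    (hsymm : ∀ i, μ.map (ε i) = μ.map (fun ω => -(ε i ω)))
    {G : (ι → ℝ) → ℝ≥0∞} (hG : Measurable G) (s : ι → Bool) :
    ∫⁻ ω, G (fun i => boolSign (s i) * ε i ω) ∂μ = ∫⁻ ω, G (fun i => ε i ω) ∂μ := by
  have hmeas' : ∀ i, Measurable fun ω => boolSign (s i) * ε i ω :=
    fun i => (hmeas i).const_mul _
  have hlaw : ∀ i, μ.map (ε i) = μ.map fun ω => boolSign (s i) * ε i ω := by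
    intro i
    cases s i
    · simpa [boolSign] using hsymm i
    · simp [boolSign]
  rw [← lintegral_map hG (measurable_pi_lambda _ hmeas'),
    ← lintegral_map hG (measurable_pi_lambda _ hmeas),
    map_fun_eq_of_iIndepFun hmeas hmeas' hindep
      (hindep.comp _ fun i => measurable_const_mul (boolSign (s i))) hlaw]

theorem stmt2_general {V : Type*} [AddCommGroup V] [Module ℝ V] [TopologicalSpace V]
    [IsTopologicalAddGroup V] [ContinuousSMul ℝ V]
    {Ω : Type*} [MeasurableSpace Ω] (μ : Measure Ω)
    (F : V → ENNReal) (hFcont : Continuous F)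
    (hFconv : ∀ x y : V, ∀ a b : ℝ, 0 ≤ a → 0 ≤ b → a + b = 1 →
      F (a • x + b • y) ≤ ENNReal.ofReal a * F x + ENNReal.ofReal b * F y)
    (N : ℕ) (x : Fin N → V) (ε : Fin N → Ω → ℝ)
    (hmeas : ∀ i, Measurable (ε i))
    (hindep : iIndepFun ε μ)
    (hsymm : ∀ i, μ.map (ε i) = μ.map (fun ω => -(ε i ω)))
    (α : Fin N → ℝ) (hα : ∀ i, |α i| ≤ 1) :
    ∫⁻ ω, F (∑ i, (α i * ε i ω) • x i) ∂μ ≤ ∫⁻ ω, F (∑ i, ε i ω • x i) ∂μ := by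
  set G : (Fin N → ℝ) → ℝ≥0∞ := fun y => F (∑ i, y i • x i)
  have hG : Measurable G := (hFcont.comp (continuous_finsetSum _ fun i _ =>
    (continuous_apply i).smul continuous_const)).measurable
  have hsign : ∀ s : Fin N → Bool,
      ∫⁻ ω, F (∑ i, (boolSign (s i) * ε i ω) • x i) ∂μ = ∫⁻ ω, F (∑ i, ε i ω • x i) ∂μ :=
    lintegral_boolSign_mul_eq hmeas hindep hsymm hG
  calc ∫⁻ ω, F (∑ i, (α i * ε i ω) • x i) ∂μ
      ≤ ∫⁻ ω, ∑ s : Fin N → Bool, ENNReal.ofReal (∏ j, signWeight (α j) (s j))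
          * F (∑ i, (boolSign (s i) * ε i ω) • x i) ∂μ :=
        lintegral_mono fun ω => apply_sum_mul_smul_le_sum_signPatterns hFconv hα _ x
    _ = ∑ s : Fin N → Bool, ENNReal.ofReal (∏ j, signWeight (α j) (s j))
          * ∫⁻ ω, F (∑ i, ε i ω • x i) ∂μ := by
        have hterm : ∀ s : Fin N → Bool,
            Measurable fun ω => F (∑ i, (boolSign (s i) * ε i ω) • x i) :=
          fun s => hG.comp (measurable_pi_lambda _ fun i => (hmeas i).const_mul _)
        rw [lintegral_finsetSum' _ fun s _ => ((hterm s).const_mul _).aemeasurable]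
        simp only [lintegral_const_mul' _ _ ENNReal.ofReal_ne_top, hsign]
    _ = ∫⁻ ω, F (∑ i, ε i ω • x i) ∂μ := by
        rw [← sum_mul, ← ENNReal.ofReal_sum_of_nonneg fun s _ =>
          prod_nonneg fun j _ => signWeight_nonneg (hα j) (s j), sum_prod_signWeight,
          ENNReal.ofReal_one, one_mul]

theorem stmt2 {V : Type*} [AddCommGroup V] [Module ℝ V] [TopologicalSpace V]
    [IsTopologicalAddGroup V] [ContinuousSMul ℝ V]
    {Ω : Type*} [MeasurableSpace Ω] (μ : Measure Ω) [IsProbabilityMeasure μ]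
    (F : V → ENNReal) (hFcont : Continuous F)
    (hFconv : ∀ x y : V, ∀ a b : ℝ, 0 ≤ a → 0 ≤ b → a + b = 1 →
      F (a • x + b • y) ≤ ENNReal.ofReal a * F x + ENNReal.ofReal b * F y)
    (N : ℕ) (x : Fin N → V) (ε : Fin N → Ω → ℝ)
    (hmeas : ∀ i, Measurable (ε i))
    (hindep : iIndepFun ε μ)
    (hident : ∀ i j, μ.map (ε i) = μ.map (ε j))
    (hsymm : ∀ i, μ.map (ε i) = μ.map (fun ω => -(ε i ω)))
    (α : Fin N → ℝ) (hα : ∀ i, |α i| ≤ 1) :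
    ∫⁻ ω, F (∑ i, (α i * ε i ω) • x i) ∂μ ≤ ∫⁻ ω, F (∑ i, ε i ω • x i) ∂μ :=
  stmt2_general μ F hFcont hFconv N x ε hmeas hindep hsymm α hα
end

section
/- Let V be a topological vector space, F : V → [0,∞] a continuous seminorm, (x_i)_{i=1}^N elements of V, (ε_i) i.i.d. real symmetric random variables, and (α_i) real numbers in [-1,1]. Then for all t > 0, P[F(∑_i α_i ε_i x_i) ≥ t] ≤ 2 P[F(∑_i ε_i x_i) ≥ t]. -/
/-!
By the sign invariance of the law of `(ε i)` one may replace `α i` by `|α i| ∈ [0, 1]`.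
Summation by parts, peeling off the smallest coefficient at each step, writes
`∑ |α i| ε i x i` as a combination with total weight at most `1` of partial sums
`∑ i ∈ U, ε i x i` along a chain of index sets `U`, so `F` of it is bounded by `F` of one of
these partial sums. Lévy's reflection principle bounds the probability that some partial sum
along a chain reaches `t` by twice the probability that the full sum does.
-/

open MeasureTheory ProbabilityTheory Finset

structure IsExtendedSeminorm {V : Type*} [AddCommGroup V] [Module ℝ V] (F : V → ENNReal) :
    Prop where
  add_le : ∀ x y, F (x + y) ≤ F x + F y
  smul : ∀ (a : ℝ) x, F (a • x) = ENNReal.ofReal |a| * F x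

namespace IsExtendedSeminorm

variable {V : Type*} [AddCommGroup V] [Module ℝ V] {F : V → ENNReal}

lemma map_zero (hF : IsExtendedSeminorm F) : F 0 = 0 := by
  simpa using hF.smul 0 0

lemma le_max_of_add_eq_two_smul (hF : IsExtendedSeminorm F) {u v z : V}
    (h : u + v = (2 : ℝ) • z) : F z ≤ max (F u) (F v) := by
  have h2 : 2 * F z ≤ 2 * max (F u) (F v) :=
    calc 2 * F z = F (u + v) := by rw [h, hF.smul]; norm_num
      _ ≤ F u + F v := hF.add_le u v
      _ ≤ 2 * max (F u) (F v) := by rw [two_mul]; exact add_le_add le_sup_left le_sup_right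
  exact (ENNReal.mul_le_mul_iff_right two_ne_zero ENNReal.ofNat_ne_top).1 h2

lemma exists_chain_le_ofReal_mul (hF : IsExtendedSeminorm F) {ι : Type*} [DecidableEq ι]
    (β : ι → ℝ) (s : Finset ι) :
    ∀ b M : ℝ, (∀ i ∈ s, b ≤ β i ∧ β i ≤ M) →
      ∃ 𝒞 : Finset (Finset ι), IsChain (· ⊆ ·) (𝒞 : Set (Finset ι)) ∧ (∀ U ∈ 𝒞, U ⊆ s) ∧
        ∀ y : ι → V, ∃ U ∈ 𝒞,
          F (∑ i ∈ s, (β i - b) • y i) ≤ ENNReal.ofReal (M - b) * F (∑ i ∈ U, y i) := by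
  induction s using Finset.induction_on_min_value β with
  | empty => exact fun _ _ _ => ⟨{∅}, by simp, by simp, fun y => ⟨∅, by simp [hF.map_zero]⟩⟩
  | insert a s ha hmin ih =>
    intro b M hs
    obtain ⟨hba, haM⟩ := hs a (mem_insert_self a s)
    obtain ⟨𝒞, h𝒞, h𝒞s, hbound⟩ :=
      ih (β a) M fun i hi => ⟨hmin i hi, (hs i (mem_insert_of_mem hi)).2⟩
    refine ⟨insert (insert a s) 𝒞, ?_, ?_, fun y => ?_⟩
    · rw [coe_insert]
      exact h𝒞.insert fun U hU _ => Or.inr ((h𝒞s U hU).trans (subset_insert a s))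
    · simpa using fun U hU => (h𝒞s U hU).trans (subset_insert a s)
    obtain ⟨U, hU, hUy⟩ := hbound y
    have hsplit : ∑ i ∈ insert a s, (β i - b) • y i
        = (β a - b) • ∑ i ∈ insert a s, y i + ∑ i ∈ s, (β i - β a) • y i := by
      rw [sum_insert ha, sum_insert ha, smul_add, smul_sum, add_assoc, ← sum_add_distrib]
      simp only [← add_smul, sub_add_sub_cancel']
    set m := max (F (∑ i ∈ insert a s, y i)) (F (∑ i ∈ U, y i))
    have hm : F (∑ i ∈ insert a s, (β i - b) • y i) ≤ ENNReal.ofReal (M - b) * m :=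
      calc F (∑ i ∈ insert a s, (β i - b) • y i)
          ≤ ENNReal.ofReal (β a - b) * F (∑ i ∈ insert a s, y i)
            + ENNReal.ofReal (M - β a) * F (∑ i ∈ U, y i) := by
            rw [hsplit]
            refine (hF.add_le _ _).trans (add_le_add ?_ hUy)
            rw [hF.smul, abs_of_nonneg (sub_nonneg.2 hba)]
        _ ≤ ENNReal.ofReal (β a - b) * m + ENNReal.ofReal (M - β a) * m := by
            gcongr
            exacts [le_max_left _ _, le_max_right _ _]
        _ = ENNReal.ofReal (M - b) * m := by
            rw [← add_mul, ← ENNReal.ofReal_add (sub_nonneg.2 hba) (sub_nonneg.2 haM)]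
            ring_nf
    obtain h | h : m = F (∑ i ∈ insert a s, y i) ∨ m = F (∑ i ∈ U, y i) := max_choice _ _
    · exact ⟨insert a s, mem_insert_self _ _, by rwa [h] at hm⟩
    · exact ⟨U, mem_insert_of_mem hU, by rwa [h] at hm⟩

end IsExtendedSeminorm

lemma MeasureTheory.MeasurePreserving.measure_le_two_mul_measure_inter {α : Type*}
    [MeasurableSpace α] {π : Measure α} {T : α → α} (hT : MeasurePreserving T π π)
    {B E : Set α} (hB : MeasurableSet B) (hE : MeasurableSet E) (hTB : T ⁻¹' B = B)
    (hBE : B ⊆ E ∪ T ⁻¹' E) : π B ≤ 2 * π (B ∩ E) := by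
  have hpre : B ∩ T ⁻¹' E = T ⁻¹' (B ∩ E) := by rw [Set.preimage_inter, hTB]
  calc π B ≤ π (B ∩ E ∪ B ∩ T ⁻¹' E) := measure_mono fun c hc => by
        rcases hBE hc with h | h
        exacts [Or.inl ⟨hc, h⟩, Or.inr ⟨hc, h⟩]
    _ ≤ π (B ∩ E) + π (B ∩ T ⁻¹' E) := measure_union_le _ _
    _ = 2 * π (B ∩ E) := by
        rw [hpre, hT.measure_preimage (hB.inter hE).nullMeasurableSet, two_mul]

section FirstHitting

variable {κ X : Type*} [PartialOrder κ] (𝒞 : Finset κ) (A : κ → Set X)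

def firstHitting (U : κ) : Set X := A U \ ⋃ U' ∈ 𝒞, ⋃ (_ : U' < U), A U'

lemma subset_biUnion_firstHitting [WellFoundedLT κ] :
    {x | ∃ U ∈ 𝒞, x ∈ A U} ⊆ ⋃ U ∈ 𝒞, firstHitting 𝒞 A U := by
  rintro x ⟨U, hU, hxU⟩
  obtain ⟨U₀, ⟨hU₀, hxU₀⟩, hmin⟩ :=
    exists_minimal_of_wellFoundedLT (fun U => U ∈ 𝒞 ∧ x ∈ A U) ⟨U, hU, hxU⟩
  refine Set.mem_iUnion₂.2 ⟨U₀, hU₀, hxU₀, fun hx => ?_⟩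
  simp only [Set.mem_iUnion] at hx
  obtain ⟨U', hU', hlt, hxU'⟩ := hx
  exact hlt.not_ge (hmin ⟨hU', hxU'⟩ hlt.le)

lemma pairwiseDisjoint_firstHitting (h𝒞 : IsChain (· ≤ ·) (𝒞 : Set κ)) :
    (𝒞 : Set κ).PairwiseDisjoint (firstHitting 𝒞 A) := by
  have key : ∀ U ∈ 𝒞, ∀ U', U < U' → Disjoint (firstHitting 𝒞 A U) (firstHitting 𝒞 A U') :=
    fun U hU U' hlt => Set.disjoint_left.2 fun x hx hx' =>
      hx'.2 (Set.mem_biUnion hU (Set.mem_iUnion.2 ⟨hlt, hx.1⟩))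
  intro U hU U' hU' hne
  rcases h𝒞 hU hU' hne with h | h
  exacts [key U hU U' (h.lt_of_ne hne), (key U' hU' U (h.lt_of_ne hne.symm)).symm]

end FirstHitting

section SignInvariance

variable {ι : Type*}

def IsSignInvariant (π : Measure (ι → ℝ)) : Prop :=
  ∀ e : ι → ℝ, (∀ i, e i = 1 ∨ e i = -1) → π.map (e * ·) = π

lemma IsSignInvariant.measurePreserving {π : Measure (ι → ℝ)} (hπ : IsSignInvariant π)
    {e : ι → ℝ} (he : ∀ i, e i = 1 ∨ e i = -1) : MeasurePreserving (e * ·) π π :=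
  ⟨by fun_prop, hπ e he⟩

lemma isSignInvariant_map_of_iIndepFun [Fintype ι] {Ω : Type*} [MeasurableSpace Ω]
    {μ : Measure Ω} {ε : ι → Ω → ℝ} (hmeas : ∀ i, Measurable (ε i)) (hindep : iIndepFun ε μ)
    (hsymm : ∀ i, μ.map (ε i) = μ.map (fun ω => -(ε i ω))) :
    IsSignInvariant (μ.map fun ω i => ε i ω) := by
  intro e he
  rw [Measure.map_map (by fun_prop) (measurable_pi_lambda _ hmeas)]
  change μ.map (fun ω i => e i * ε i ω) = _
  rw [(hindep.comp (fun i r => e i * r) fun i => measurable_const_mul _).map_fun_eq_pi_map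
      fun i => ((hmeas i).const_mul _).aemeasurable,
    hindep.map_fun_eq_pi_map fun i => (hmeas i).aemeasurable]
  congr 1
  funext i
  rcases he i with h | h <;> simp [h, hsymm]

def reflectionSigns [DecidableEq ι] (U : Finset ι) : ι → ℝ := fun i => if i ∈ U then 1 else -1

lemma reflectionSigns_eq_one_or [DecidableEq ι] (U : Finset ι) (i : ι) :
    reflectionSigns U i = 1 ∨ reflectionSigns U i = -1 := by
  unfold reflectionSigns; split_ifs <;> simp

variable [DecidableEq ι] {V : Type*} [AddCommGroup V] [Module ℝ V]

lemma sum_reflectionSigns_mul_smul_of_subset {U U' : Finset ι} (h : U' ⊆ U) (c : ι → ℝ)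
    (x : ι → V) : ∑ i ∈ U', (reflectionSigns U * c) i • x i = ∑ i ∈ U', c i • x i :=
  sum_congr rfl fun i hi => by simp [reflectionSigns, h hi]

lemma sum_reflectionSigns_mul_smul_add [Fintype ι] (U : Finset ι) (c : ι → ℝ) (x : ι → V) :
    ∑ i, (reflectionSigns U * c) i • x i + ∑ i, c i • x i = (2 : ℝ) • ∑ i ∈ U, c i • x i := by
  have h : ∀ i, (reflectionSigns U * c) i • x i + c i • x i
      = if i ∈ U then (2 : ℝ) • (c i • x i) else 0 := fun i => by
    by_cases hi : i ∈ U <;> simp [reflectionSigns, hi, two_smul]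
  rw [← sum_add_distrib, sum_congr rfl fun i _ => h i, sum_ite_mem, univ_inter, smul_sum]

variable [TopologicalSpace V] [ContinuousAdd V] [ContinuousSMul ℝ V] [Fintype ι]
  {π : Measure (ι → ℝ)} {F : V → ENNReal}

/-- Lévy's reflection principle along a chain: on the event that the partial sum over `U` is the
first one to reach level `t`, reflecting the coordinates outside `U` preserves the event, and the
total sums before and after the reflection average to that partial sum. -/
theorem IsSignInvariant.measure_exists_chain_le_two_mul (hπ : IsSignInvariant π)
    (hF : IsExtendedSeminorm F) (hFcont : Continuous F) (x : ι → V) {𝒞 : Finset (Finset ι)}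
    (h𝒞 : IsChain (· ⊆ ·) (𝒞 : Set (Finset ι))) (t : ENNReal) :
    π {c | ∃ U ∈ 𝒞, t ≤ F (∑ i ∈ U, c i • x i)} ≤ 2 * π {c | t ≤ F (∑ i, c i • x i)} := by
  set A : Finset ι → Set (ι → ℝ) := fun U => {c | t ≤ F (∑ i ∈ U, c i • x i)}
  have hA : ∀ U, MeasurableSet (A U) := fun U =>
    measurableSet_le measurable_const (hFcont.comp (by fun_prop)).measurable
  set B := firstHitting 𝒞 A
  have hB : ∀ U, MeasurableSet (B U) := fun U =>
    (hA U).diff (Finset.measurableSet_biUnion _ fun U' _ => .iUnion fun _ => hA U')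
  have hdisj : (𝒞 : Set (Finset ι)).PairwiseDisjoint B := pairwiseDisjoint_firstHitting 𝒞 A h𝒞
  have hrefl : ∀ U, π (B U) ≤ 2 * π (B U ∩ A univ) := by
    intro U
    have hTA : ∀ U' ⊆ U, (reflectionSigns U * ·) ⁻¹' A U' = A U' := fun U' hU' => by
      ext c
      simp only [A, Set.mem_preimage, Set.mem_ofPred_eq,
        sum_reflectionSigns_mul_smul_of_subset hU']
    refine (hπ.measurePreserving (reflectionSigns_eq_one_or U)).measure_le_two_mul_measure_inter
      (hB U) (hA univ) ?_ fun c hc => ?_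
    · simp only [B, firstHitting, Set.preimage_sdiff, Set.preimage_iUnion, hTA U subset_rfl]
      exact congrArg _ (Set.iUnion₂_congr fun U' _ => Set.iUnion_congr fun hlt => hTA U' hlt.le)
    · have := hc.1.trans (hF.le_max_of_add_eq_two_smul (sum_reflectionSigns_mul_smul_add U c x))
      rcases le_max_iff.1 this with h | h
      exacts [Or.inr h, Or.inl h]
  calc π {c | ∃ U ∈ 𝒞, c ∈ A U} ≤ π (⋃ U ∈ 𝒞, B U) :=
        measure_mono (subset_biUnion_firstHitting 𝒞 A)
    _ = ∑ U ∈ 𝒞, π (B U) := measure_biUnion_finset hdisj fun U _ => hB U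
    _ ≤ ∑ U ∈ 𝒞, 2 * π (B U ∩ A univ) := sum_le_sum fun U _ => hrefl U
    _ = 2 * π (⋃ U ∈ 𝒞, B U ∩ A univ) := by
        rw [← mul_sum, measure_biUnion_finset (hdisj.mono fun U => Set.inter_subset_left)
          fun U _ => (hB U).inter (hA univ)]
    _ ≤ 2 * π (A univ) := by
        gcongr
        exact Set.iUnion₂_subset fun U _ => Set.inter_subset_right

theorem IsSignInvariant.measure_le_two_mul (hπ : IsSignInvariant π) (hF : IsExtendedSeminorm F)
    (hFcont : Continuous F) (x : ι → V) (α : ι → ℝ) (hα : ∀ i, |α i| ≤ 1) (t : ENNReal) :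
    π {c | t ≤ F (∑ i, (α i * c i) • x i)} ≤ 2 * π {c | t ≤ F (∑ i, c i • x i)} := by
  obtain ⟨𝒞, h𝒞, -, hbound⟩ := hF.exists_chain_le_ofReal_mul (fun i => |α i|) univ 0 1
    fun i _ => ⟨abs_nonneg _, hα i⟩
  set e : ι → ℝ := fun i => if 0 ≤ α i then 1 else -1
  have he : ∀ i, e i = 1 ∨ e i = -1 := fun i => by simp only [e]; split_ifs <;> simp
  have hαe : ∀ i r, |α i| * (e i * r) = α i * r := fun i r => by
    simp only [e]
    split_ifs with h
    · rw [abs_of_nonneg h, one_mul]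
    · rw [abs_of_neg (not_le.1 h)]; ring
  have hmeas : MeasurableSet {c : ι → ℝ | t ≤ F (∑ i, (|α i| * c i) • x i)} :=
    measurableSet_le measurable_const (hFcont.comp (by fun_prop)).measurable
  calc π {c | t ≤ F (∑ i, (α i * c i) • x i)}
      = π {c | t ≤ F (∑ i, (|α i| * c i) • x i)} := by
        rw [← (hπ.measurePreserving he).measure_preimage hmeas.nullMeasurableSet]
        congr 1
        ext c
        simp only [Set.mem_preimage, Set.mem_ofPred_eq, Pi.mul_apply, hαe]
    _ ≤ π {c | ∃ U ∈ 𝒞, t ≤ F (∑ i ∈ U, c i • x i)} := measure_mono fun c hc => by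
        obtain ⟨U, hU, hcU⟩ := hbound fun i => c i • x i
        refine ⟨U, hU, hc.trans ?_⟩
        simpa [mul_smul] using hcU
    _ ≤ 2 * π {c | t ≤ F (∑ i, c i • x i)} := hπ.measure_exists_chain_le_two_mul hF hFcont x h𝒞 t

end SignInvariance

theorem stmt3_general {V : Type*} [AddCommGroup V] [Module ℝ V] [TopologicalSpace V]
    [IsTopologicalAddGroup V] [ContinuousSMul ℝ V]
    {Ω : Type*} [MeasurableSpace Ω] (μ : Measure Ω)
    (F : V → ENNReal) (hFcont : Continuous F)
    -- F is a (possibly infinite-valued) seminorm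
    (hFadd : ∀ x y : V, F (x + y) ≤ F x + F y)
    (hFsmul : ∀ (a : ℝ) (x : V), F (a • x) = ENNReal.ofReal |a| * F x)
    (N : ℕ) (x : Fin N → V) (ε : Fin N → Ω → ℝ)
    (hmeas : ∀ i, Measurable (ε i))
    (hindep : iIndepFun ε μ)
    (hsymm : ∀ i, μ.map (ε i) = μ.map (fun ω => -(ε i ω)))
    (α : Fin N → ℝ) (hα : ∀ i, |α i| ≤ 1) :
    ∀ t : ENNReal, 0 < t →
      μ {ω | t ≤ F (∑ i, (α i * ε i ω) • x i)} ≤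
        2 * μ {ω | t ≤ F (∑ i, ε i ω • x i)} := by
  intro t _
  have hlaw : ∀ g : (Fin N → ℝ) → V, Continuous g →
      μ {ω | t ≤ F (g fun i => ε i ω)} = (μ.map fun ω i => ε i ω) {c | t ≤ F (g c)} :=
    fun g hg => (Measure.map_apply (measurable_pi_lambda _ hmeas)
      (measurableSet_le measurable_const (hFcont.comp hg).measurable)).symm
  rw [hlaw (fun c => ∑ i, (α i * c i) • x i) (by fun_prop),
    hlaw (fun c => ∑ i, c i • x i) (by fun_prop)]
  exact (isSignInvariant_map_of_iIndepFun hmeas hindep hsymm).measure_le_two_mul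
    ⟨hFadd, hFsmul⟩ hFcont x α hα t

theorem stmt3 {V : Type*} [AddCommGroup V] [Module ℝ V] [TopologicalSpace V]
    [IsTopologicalAddGroup V] [ContinuousSMul ℝ V]
    {Ω : Type*} [MeasurableSpace Ω] (μ : Measure Ω) [IsProbabilityMeasure μ]
    (F : V → ENNReal) (hFcont : Continuous F)
    -- F is a (possibly infinite-valued) seminorm
    (hFadd : ∀ x y : V, F (x + y) ≤ F x + F y)
    (hFsmul : ∀ (a : ℝ) (x : V), F (a • x) = ENNReal.ofReal |a| * F x)
    (N : ℕ) (x : Fin N → V) (ε : Fin N → Ω → ℝ)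
    (hmeas : ∀ i, Measurable (ε i))
    (hindep : iIndepFun ε μ)
    (hident : ∀ i j, μ.map (ε i) = μ.map (ε j))
    (hsymm : ∀ i, μ.map (ε i) = μ.map (fun ω => -(ε i ω)))
    (α : Fin N → ℝ) (hα : ∀ i, |α i| ≤ 1) :
    ∀ t : ENNReal, 0 < t →
      μ {ω | t ≤ F (∑ i, (α i * ε i ω) • x i)} ≤
        2 * μ {ω | t ≤ F (∑ i, ε i ω • x i)} :=
  stmt3_general μ F hFcont hFadd hFsmul N x ε hmeas hindep hsymm α hα
end

section
/- Let Q_n(θ) = ∑_{k=2^n}^{2^{n+1}-1} a_k ξ_k e(kθ) with ξ_k i.i.d. standard complex Gaussians, a_k ≥ 0, σ_n² = ∑_{k=2^n}^{2^{n+1}-1} a_k², and ρ_n(θ) = σ_n^{-2}|E[Q_n(θ) conj(Q_n(0))]| (when σ_n > 0). Then 1 - ρ_n(θ)² ≤ C · 2^{2n} θ² for all θ ∈ [-1,1] and an absolute constant C > 1. -/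
/-!
The covariance is a weighted average of the unit vectors `e(kθ)` with weights `a_k² / σ_n²`.
Comparing its norm with its real part gives `1 - ρ ≤ σ_n⁻² ∑ a_k² (1 - cos (2πkθ))`, and
`1 - cos x ≤ x² / 2` with `k < 2^{n+1}` bounds each term by `8π² 2^{2n} θ²`. Since `0 ≤ ρ ≤ 1`,
`1 - ρ² ≤ 2 (1 - ρ)`, which gives the constant `C = 16π²`.
-/

open Complex Real

section WeightedPhases

variable {ι : Type*} (s : Finset ι) (w φ : ι → ℝ)

lemma norm_sum_ofReal_mul_exp_le (hw : ∀ k ∈ s, 0 ≤ w k) :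
    ‖∑ k ∈ s, (w k : ℂ) * exp (φ k * I)‖ ≤ ∑ k ∈ s, w k := by
  refine (norm_sum_le _ _).trans (le_of_eq (Finset.sum_congr rfl fun k hk => ?_))
  rw [norm_mul, norm_exp_ofReal_mul_I, mul_one, norm_real, Real.norm_of_nonneg (hw k hk)]

lemma sum_sub_norm_sum_ofReal_mul_exp_le :
    ∑ k ∈ s, w k - ‖∑ k ∈ s, (w k : ℂ) * exp (φ k * I)‖ ≤
      ∑ k ∈ s, w k * (1 - Real.cos (φ k)) := by
  have hre : (∑ k ∈ s, (w k : ℂ) * exp (φ k * I)).re = ∑ k ∈ s, w k * Real.cos (φ k) := by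
    simp only [re_sum, re_ofReal_mul, exp_ofReal_mul_I_re]
  have := re_le_norm (∑ k ∈ s, (w k : ℂ) * exp (φ k * I))
  simp only [mul_sub, mul_one, Finset.sum_sub_distrib]
  linarith

end WeightedPhases

lemma one_sub_div_sq_le_two_mul {r σ ε : ℝ} (hσ : 0 < σ) (hr : 0 ≤ r) (hrσ : r ≤ σ)
    (h : σ - r ≤ ε * σ) : 1 - (r / σ) ^ 2 ≤ 2 * ε := by
  have hρ0 : 0 ≤ r / σ := div_nonneg hr hσ.le
  have hρ1 : r / σ ≤ 1 := (div_le_one hσ).2 hrσ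
  have hε : 1 - r / σ ≤ ε := by
    rw [one_sub_div hσ.ne', div_le_iff₀ hσ]
    exact h
  nlinarith

lemma one_sub_cos_le_sq_div_two (x : ℝ) : 1 - Real.cos x ≤ x ^ 2 / 2 := by
  linarith [one_sub_sq_div_two_le_cos (x := x)]

lemma one_sub_cos_two_pi_mul_le {n k : ℕ} (hk : k < 2 ^ (n + 1)) (θ : ℝ) :
    1 - Real.cos (2 * π * k * θ) ≤ 8 * π ^ 2 * 2 ^ (2 * n) * θ ^ 2 := by
  have hk' : (k : ℝ) ^ 2 ≤ 4 * 2 ^ (2 * n) := by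
    have : (k : ℝ) ≤ 2 ^ (n + 1) := by exact_mod_cast hk.le
    calc (k : ℝ) ^ 2 ≤ (2 ^ (n + 1)) ^ 2 := by gcongr
      _ = 4 * 2 ^ (2 * n) := by ring
  calc 1 - Real.cos (2 * π * k * θ) ≤ (2 * π * k * θ) ^ 2 / 2 := one_sub_cos_le_sq_div_two _
    _ = 2 * π ^ 2 * θ ^ 2 * (k : ℝ) ^ 2 := by ring
    _ ≤ 2 * π ^ 2 * θ ^ 2 * (4 * 2 ^ (2 * n)) := by gcongr
    _ = 8 * π ^ 2 * 2 ^ (2 * n) * θ ^ 2 := by ring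

theorem stmt9 :
    ∃ C : ℝ, 1 < C ∧
      ∀ (n : ℕ) (a : ℕ → ℝ), (∀ k, 0 ≤ a k) →
        ∀ θ : ℝ, θ ∈ Set.Icc (-1 : ℝ) 1 →
          let σ2 : ℝ := ∑ k ∈ Finset.Ico (2 ^ n) (2 ^ (n + 1)), a k ^ 2
          -- `ρ_n(θ) = σ_n^{-2} |E[Q_n(θ) conj(Q_n(0))]|`, where the covariance is
          -- `∑_{k=2^n}^{2^{n+1}-1} a_k² e(kθ)`
          let ρ : ℝ := ‖∑ k ∈ Finset.Ico (2 ^ n) (2 ^ (n + 1)),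
            ((a k ^ 2 : ℝ) : ℂ) * Complex.exp (2 * π * I * k * θ)‖ / σ2
          0 < σ2 →
            1 - ρ ^ 2 ≤ C * 2 ^ (2 * n) * θ ^ 2 := by
  refine ⟨16 * π ^ 2, by nlinarith [pi_gt_three], ?_⟩
  intro n a _ θ _ σ2 ρ hσ
  set S := Finset.Ico (2 ^ n) (2 ^ (n + 1))
  have hphase : ∀ k : ℕ, exp (2 * π * I * k * θ) = exp ((2 * π * k * θ : ℝ) * I) := fun k => by
    push_cast; ring_nf
  have hdefect : σ2 - ‖∑ k ∈ S, ((a k ^ 2 : ℝ) : ℂ) * exp ((2 * π * k * θ : ℝ) * I)‖ ≤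
      8 * π ^ 2 * 2 ^ (2 * n) * θ ^ 2 * σ2 :=
    calc _ ≤ ∑ k ∈ S, a k ^ 2 * (1 - Real.cos (2 * π * k * θ)) :=
          sum_sub_norm_sum_ofReal_mul_exp_le S (fun k => a k ^ 2) _
      _ ≤ ∑ k ∈ S, a k ^ 2 * (8 * π ^ 2 * 2 ^ (2 * n) * θ ^ 2) :=
          Finset.sum_le_sum fun k hk =>
            mul_le_mul_of_nonneg_left
              (one_sub_cos_two_pi_mul_le (Finset.mem_Ico.1 hk).2 θ) (sq_nonneg _)
      _ = 8 * π ^ 2 * 2 ^ (2 * n) * θ ^ 2 * σ2 := by rw [← Finset.sum_mul, mul_comm]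
  have key := one_sub_div_sq_le_two_mul hσ (norm_nonneg _)
    (norm_sum_ofReal_mul_exp_le S _ _ fun k _ => sq_nonneg (a k)) hdefect
  simp only [ρ, hphase]
  linarith
end

section
/- Suppose (σ_n²)_{n≥0} is a nonnegative sequence with ∑_{k=0}^∞ sup_{n≥k} σ_n² = ∞ but ∑_{n=0}^∞ σ_n² < ∞. Then for any C > 1 there exists a strictly increasing sequence (j_k) of positive integers with j_{k+1}/j_k > C for all k and ∑_{k=1}^∞ σ_{j_k}² · j_k = ∞. -/
/-!
Write `τ k = sup_{n ≥ k} σ n`. Since `σ n → 0` and `σ ≥ 0`, every such supremum is attained, say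
`τ (2 ^ j) = σ (N j)` with `N j ≥ 2 ^ j`; so `σ (N j) * N j ≥ 2 ^ j * τ (2 ^ j)`, and the right-hand
side is not summable by Cauchy condensation, `τ` being antitone. It remains to thin out the `N j`
to a sequence growing faster than `C`: choose indices greedily, the successor of `i` being the
least `j` with `2 ^ j > C * N i`. All indices skipped after `i` then satisfy `2 ^ j ≤ C * N i`, so
the block of the condensed series from `i` up to its successor is at most `2 * C * σ (N i) * N i`.
-/

open Filter Topology Finset

lemma Filter.Tendsto.exists_isMaxOn_of_nonneg {α : Type*} {f : α → ℝ}
    (hf : Tendsto f cofinite (𝓝 0)) (h0 : ∀ a, 0 ≤ f a) {s : Set α} (hs : s.Nonempty) :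
    ∃ a ∈ s, IsMaxOn f s a := by
  by_cases hpos : ∃ b ∈ s, 0 < f b
  · obtain ⟨b, hbs, hb⟩ := hpos
    have hfin : {a | f b ≤ f a}.Finite := by
      simpa only [not_lt] using eventually_cofinite.mp (hf.eventually (gt_mem_nhds hb))
    obtain ⟨a, ⟨has, hba⟩, hmax⟩ :=
      (s ∩ {a | f b ≤ f a}).exists_max_image f (hfin.inter_of_right s) ⟨b, hbs, le_refl (f b)⟩
    refine ⟨a, has, fun c hcs => ?_⟩
    rcases le_or_gt (f b) (f c) with hbc | hcb
    · exact hmax c ⟨hcs, hbc⟩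
    · exact hcb.le.trans hba
  · push Not at hpos
    obtain ⟨a, has⟩ := hs
    exact ⟨a, has, fun c hcs => (hpos c hcs).trans (h0 a)⟩

noncomputable def tailSup (f : ℕ → ℝ) (k : ℕ) : ℝ := ⨆ n : {n : ℕ // k ≤ n}, f n

section TailSup

variable {f : ℕ → ℝ}

lemma exists_isMaxOn_Ici (h0 : ∀ n, 0 ≤ f n) (hf : Tendsto f atTop (𝓝 0)) (k : ℕ) :
    ∃ n ∈ Set.Ici k, IsMaxOn f (Set.Ici k) n :=
  (Nat.cofinite_eq_atTop ▸ hf).exists_isMaxOn_of_nonneg h0 Set.nonempty_Ici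

lemma le_tailSup (h0 : ∀ n, 0 ≤ f n) (hf : Tendsto f atTop (𝓝 0)) {k n : ℕ}
    (h : k ≤ n) : f n ≤ tailSup f k := by
  obtain ⟨m, -, hm⟩ := exists_isMaxOn_Ici h0 hf k
  exact le_ciSup (f := fun n : {n : ℕ // k ≤ n} => f n)
    ⟨f m, by rintro _ ⟨n, rfl⟩; exact hm n.2⟩ ⟨n, h⟩

lemma exists_eq_tailSup (h0 : ∀ n, 0 ≤ f n) (hf : Tendsto f atTop (𝓝 0)) (k : ℕ) :
    ∃ n, k ≤ n ∧ f n = tailSup f k := by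
  obtain ⟨n, hn, hmax⟩ := exists_isMaxOn_Ici h0 hf k
  exact ⟨n, hn, le_antisymm (le_tailSup h0 hf hn) (ciSup_le fun m => hmax m.2)⟩

lemma tailSup_nonneg (h0 : ∀ n, 0 ≤ f n) (hf : Tendsto f atTop (𝓝 0)) (k : ℕ) : 0 ≤ tailSup f k :=
  (h0 k).trans (le_tailSup h0 hf le_rfl)

lemma tailSup_antitone (h0 : ∀ n, 0 ≤ f n) (hf : Tendsto f atTop (𝓝 0)) : Antitone (tailSup f) := by
  intro k l hkl
  obtain ⟨n, hln, hn⟩ := exists_eq_tailSup h0 hf l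
  exact hn ▸ le_tailSup h0 hf (hkl.trans hln)

end TailSup

noncomputable def leastExpAbove (x : ℝ) : ℕ := Nat.find (pow_unbounded_of_one_lt x one_lt_two)

lemma lt_two_pow_leastExpAbove (x : ℝ) : x < 2 ^ leastExpAbove x :=
  Nat.find_spec (pow_unbounded_of_one_lt x one_lt_two)

lemma two_pow_le_of_lt_leastExpAbove {x : ℝ} {j : ℕ} (h : j < leastExpAbove x) : 2 ^ j ≤ x :=
  not_lt.mp (Nat.find_min _ h)

lemma two_pow_leastExpAbove_le {x : ℝ} (hx : 1 ≤ x) : 2 ^ leastExpAbove x ≤ 2 * x := by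
  have hpos : 0 < leastExpAbove x := by
    by_contra! h
    have := lt_two_pow_leastExpAbove x
    rw [Nat.le_zero.mp h, pow_zero] at this
    linarith
  have := two_pow_le_of_lt_leastExpAbove (Nat.sub_one_lt hpos.ne')
  rw [← Nat.sub_add_cancel hpos, pow_succ']
  linarith

section Greedy

variable {C : ℝ} {N : ℕ → ℕ}

variable (C N) in
noncomputable def greedyIdx : ℕ → ℕ
  | 0 => 0
  | k + 1 => leastExpAbove (C * N (greedyIdx k))

lemma mul_lt_greedyIdx_succ (hN : ∀ j, 2 ^ j ≤ N j) (k : ℕ) :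
    C * N (greedyIdx C N k) < N (greedyIdx C N (k + 1)) :=
  (lt_two_pow_leastExpAbove _).trans_le (by exact_mod_cast hN _)

lemma greedyIdx_lt_succ (hC : 1 ≤ C) (hN : ∀ j, 2 ^ j ≤ N j) (k : ℕ) :
    greedyIdx C N k < greedyIdx C N (k + 1) := by
  by_contra! h
  have h1 : (2 : ℝ) ^ greedyIdx C N (k + 1) ≤ N (greedyIdx C N k) := by
    exact_mod_cast (Nat.pow_le_pow_right two_pos h).trans (hN _)
  have h2 : C * N (greedyIdx C N k) < 2 ^ greedyIdx C N (k + 1) := lt_two_pow_leastExpAbove _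
  have h3 : (N (greedyIdx C N k) : ℝ) ≤ C * N (greedyIdx C N k) :=
    le_mul_of_one_le_left (Nat.cast_nonneg _) hC
  linarith

lemma greedyIdx_strictMono (hC : 1 ≤ C) (hN : ∀ j, 2 ^ j ≤ N j) : StrictMono (greedyIdx C N) :=
  strictMono_nat_of_lt_succ (greedyIdx_lt_succ hC hN)

lemma two_pow_greedyIdx_succ_le (hC : 1 ≤ C) (hN : ∀ j, 2 ^ j ≤ N j) (k : ℕ) :
    (2 : ℝ) ^ greedyIdx C N (k + 1) ≤ 2 * C * N (greedyIdx C N k) := by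
  have hN1 : (1 : ℝ) ≤ N (greedyIdx C N k) := by exact_mod_cast Nat.one_le_two_pow.trans (hN _)
  rw [mul_assoc]
  exact two_pow_leastExpAbove_le (one_le_mul_of_one_le_of_one_le hC hN1)

variable {u : ℕ → ℝ}

lemma sum_Ico_greedyIdx_le (hC : 1 ≤ C) (hN : ∀ j, 2 ^ j ≤ N j) (hu0 : ∀ j, 0 ≤ u j)
    (hu : Antitone u) (k : ℕ) :
    ∑ j ∈ Ico (greedyIdx C N k) (greedyIdx C N (k + 1)), 2 ^ j * u j ≤
      2 * C * (u (greedyIdx C N k) * N (greedyIdx C N k)) := by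
  set a := greedyIdx C N k
  set b := greedyIdx C N (k + 1)
  calc ∑ j ∈ Ico a b, 2 ^ j * u j
      ≤ ∑ j ∈ Ico a b, 2 ^ j * u a :=
        sum_le_sum fun j hj => mul_le_mul_of_nonneg_left (hu (mem_Ico.mp hj).1) (by positivity)
    _ = ((∑ j ∈ Ico a b, 2 ^ j : ℕ) : ℝ) * u a := by push_cast; rw [sum_mul]
    _ ≤ 2 ^ b * u a := by
        gcongr
        · exact hu0 a
        · exact_mod_cast (Nat.geomSum_lt le_rfl fun j hj => (mem_Ico.mp hj).2).le
    _ ≤ 2 * C * N a * u a := by gcongr; exacts [hu0 a, two_pow_greedyIdx_succ_le hC hN k]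
    _ = 2 * C * (u a * N a) := by ring

lemma sum_range_greedyIdx_le (hC : 1 ≤ C) (hN : ∀ j, 2 ^ j ≤ N j) (hu0 : ∀ j, 0 ≤ u j)
    (hu : Antitone u) (K : ℕ) :
    ∑ j ∈ range (greedyIdx C N K), 2 ^ j * u j ≤
      2 * C * ∑ k ∈ range K, u (greedyIdx C N k) * N (greedyIdx C N k) := by
  induction K with
  | zero => simp [greedyIdx]
  | succ K ih =>
    rw [← sum_range_add_sum_Ico _ (greedyIdx_lt_succ hC hN K).le, sum_range_succ, mul_add]
    exact add_le_add ih (sum_Ico_greedyIdx_le hC hN hu0 hu K)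

lemma not_summable_comp_greedyIdx (hC : 1 ≤ C) (hN : ∀ j, 2 ^ j ≤ N j) (hu0 : ∀ j, 0 ≤ u j)
    (hu : Antitone u) (hdiv : ¬Summable fun j => 2 ^ j * u j) :
    ¬Summable fun k => u (greedyIdx C N k) * N (greedyIdx C N k) := by
  intro hsum
  refine hdiv (summable_of_sum_range_le
    (c := 2 * C * ∑' k, u (greedyIdx C N k) * N (greedyIdx C N k))
    (fun j => mul_nonneg (by positivity) (hu0 j)) fun J => ?_)
  calc ∑ j ∈ range J, 2 ^ j * u j
      ≤ ∑ j ∈ range (greedyIdx C N J), 2 ^ j * u j :=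
        sum_le_sum_of_subset_of_nonneg
          (range_subset_range.mpr ((greedyIdx_strictMono hC hN).id_le J))
          fun j _ _ => mul_nonneg (by positivity) (hu0 j)
    _ ≤ 2 * C * ∑ k ∈ range J, u (greedyIdx C N k) * N (greedyIdx C N k) :=
        sum_range_greedyIdx_le hC hN hu0 hu J
    _ ≤ 2 * C * ∑' k, u (greedyIdx C N k) * N (greedyIdx C N k) := by
        gcongr
        exact hsum.sum_le_tsum _ fun k _ => mul_nonneg (hu0 _) (Nat.cast_nonneg _)

end Greedy

theorem stmt12 (σsq : ℕ → ℝ) (hnonneg : ∀ n, 0 ≤ σsq n)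
    (hsum : Summable σsq)
    (htail : ¬ Summable (fun k => ⨆ n : {n : ℕ // k ≤ n}, σsq n)) :
    ∀ C : ℝ, 1 < C →
      ∃ j : ℕ → ℕ, StrictMono j ∧ (∀ k, 0 < j k) ∧
        (∀ k, C * (j k : ℝ) < (j (k + 1) : ℝ)) ∧
        ¬ Summable (fun k => σsq (j k) * (j k : ℝ)) := by
  intro C hC
  have hσ := hsum.tendsto_atTop_zero
  choose N hN_ge hN_eq using fun j => exists_eq_tailSup hnonneg hσ (2 ^ j)
  have hu : Antitone fun j => tailSup σsq (2 ^ j) :=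
    (tailSup_antitone hnonneg hσ).comp_monotone (pow_right_mono₀ one_le_two)
  have hcondensed : ¬Summable fun j => (2 : ℝ) ^ j * tailSup σsq (2 ^ j) :=
    (summable_condensed_iff_of_nonneg (tailSup_nonneg hnonneg hσ)
      fun _ _ _ h => tailSup_antitone hnonneg hσ h).not.mpr htail
  have hratio := mul_lt_greedyIdx_succ (C := C) hN_ge
  refine ⟨N ∘ greedyIdx C N, strictMono_nat_of_lt_succ fun k => ?_,
    fun k => Nat.one_le_two_pow.trans (hN_ge _), hratio, ?_⟩
  · exact_mod_cast (le_mul_of_one_le_left (Nat.cast_nonneg _) hC.le).trans_lt (hratio k)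
  · simpa only [Function.comp_apply, hN_eq] using
      not_summable_comp_greedyIdx hC.le hN_ge (fun _ => tailSup_nonneg hnonneg hσ _) hu hcondensed
end

section
/- Let (τ_k²)_{k≥0} be a nonincreasing nonnegative sequence. Then ∑_{k=0}^∞ √( (∑_{n≥k} τ_n⁴) / k ) ≲ ∑_{k=0}^∞ τ_k² , i.e. there is an absolute constant C such that the left side is at most C times the right side (interpreting the k=0 term appropriately, e.g. starting the sum at k=1). -/
open scoped ENNReal
open Finset

/-! Cut the tail `∑_{n ≥ m} τ_n⁴` into the 4-adic blocks `[4^j m, 4^{j+1} m)`. By monotonicity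
the `j`-th block is at most `4^{j+1} m τ_{4^j m}⁴`, and a square root of a sum is at most the sum
of the square roots, so `√(tail / m) ≤ ∑_j 2^{j+1} τ_{4^j m}²`. Summing over `m` and exchanging
the sums, `∑_m τ_{4^j m}² ≤ 4^{-j} ∑_n τ_n²`, which leaves the geometric series
`∑_j 2^{j+1} 4^{-j} = 4`. -/

namespace ENNReal

theorem tsum_nat_add_le_tsum_schlomilch {f : ℕ → ℝ≥0∞} {u : ℕ → ℕ}
    (hf : ∀ ⦃m n⦄, 0 < m → m ≤ n → f n ≤ f m) (h_pos : ∀ n, 0 < u n) (hu : StrictMono u) :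
    ∑' n, f (u 0 + n) ≤ ∑' k, (u (k + 1) - u k) * f (u k) := by
  refine ENNReal.tsum_le_of_sum_range_le fun N => ?_
  have hN : u 0 + N ≤ u N := by simpa [add_comm] using hu.add_le_nat N 0
  calc ∑ n ∈ range N, f (u 0 + n) ≤ ∑ n ∈ range (u N - u 0), f (u 0 + n) :=
        Finset.sum_le_sum_of_subset (Finset.range_subset_range.2 (by omega))
    _ = ∑ n ∈ Ico (u 0) (u N), f n := (Finset.sum_Ico_eq_sum_range _ _ _).symm
    _ ≤ ∑ k ∈ range N, (u (k + 1) - u k) • f (u k) :=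
        Finset.le_sum_schlomilch' hf h_pos hu.monotone N
    _ ≤ ∑' k, (u (k + 1) - u k) * f (u k) := by
        grw [← ENNReal.sum_le_tsum (range N)]
        simp only [nsmul_eq_mul, ENNReal.natCast_sub, le_refl]

theorem tsum_sq_le_sq_tsum {ι : Type*} (b : ι → ℝ≥0∞) : ∑' i, b i ^ 2 ≤ (∑' i, b i) ^ 2 := by
  rw [sq]
  calc ∑' i, b i ^ 2 ≤ ∑' i, b i * ∑' j, b j :=
        ENNReal.tsum_le_tsum fun i => by rw [sq]; gcongr; exact ENNReal.le_tsum i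
    _ = _ := ENNReal.tsum_mul_right

theorem mul_tsum_comp_mul_succ_le {g : ℕ → ℝ≥0∞} (hg : Antitone g) {d : ℕ} (hd : d ≠ 0) :
    d * ∑' k, g (d * (k + 1)) ≤ ∑' n, g n := by
  have : NeZero d := ⟨hd⟩
  calc (d : ℝ≥0∞) * ∑' k, g (d * (k + 1)) = ∑' k, ∑ r : Fin d, g (d * (k + 1)) := by
        rw [← ENNReal.tsum_mul_left]; simp
    _ ≤ ∑' k, ∑ r : Fin d, g (k * d + r) := by
        gcongr with k r
        exact hg (by nlinarith [r.2])
    _ = ∑' p : ℕ × Fin d, g (p.1 * d + p.2) := by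
        rw [ENNReal.tsum_prod (f := fun (q : ℕ) (r : Fin d) => g (q * d + r))]
        simp only [tsum_fintype]
    _ = ∑' n, g n := (Nat.divModEquiv d).symm.tsum_eq (fun n => g n)

theorem tsum_nat_add_sq_le_mul_sq_tsum {g : ℕ → ℝ≥0∞} (hg : Antitone g) {m : ℕ} (hm : m ≠ 0) :
    ∑' n, g (m + n) ^ 2 ≤ m * (∑' j, 2 ^ (j + 1) * g (4 ^ j * m)) ^ 2 := by
  have hu : StrictMono fun j => 4 ^ j * m := fun i j hij =>
    Nat.mul_lt_mul_of_pos_right (Nat.pow_lt_pow_right (by norm_num) hij) (Nat.pos_of_ne_zero hm)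
  calc ∑' n, g (m + n) ^ 2
      ≤ ∑' j, ((4 ^ (j + 1) * m : ℕ) - (4 ^ j * m : ℕ)) * g (4 ^ j * m) ^ 2 := by
        simpa using tsum_nat_add_le_tsum_schlomilch (f := fun n => g n ^ 2)
          (fun _ _ _ h => pow_le_pow_left' (hg h) 2) (fun j => by positivity) hu
    _ ≤ ∑' j, m * (2 ^ (j + 1) * g (4 ^ j * m)) ^ 2 := by
        refine ENNReal.tsum_le_tsum fun j => ?_
        calc _ ≤ ((4 ^ (j + 1) * m : ℕ) : ℝ≥0∞) * g (4 ^ j * m) ^ 2 := by grw [tsub_le_self]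
          _ = _ := by rw [mul_pow, ← pow_mul, mul_comm (j + 1), pow_mul]; push_cast; ring
    _ = m * ∑' j, (2 ^ (j + 1) * g (4 ^ j * m)) ^ 2 := ENNReal.tsum_mul_left
    _ ≤ m * (∑' j, 2 ^ (j + 1) * g (4 ^ j * m)) ^ 2 := by grw [tsum_sq_le_sq_tsum]

theorem tsum_two_pow_mul_tsum_le {g : ℕ → ℝ≥0∞} (hg : Antitone g) :
    ∑' j, 2 ^ (j + 1) * ∑' k, g (4 ^ j * (k + 1)) ≤ 4 * ∑' n, g n := by
  have h_half_four : (2 : ℝ≥0∞)⁻¹ * 4 = 2 := by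
    rw [show (4 : ℝ≥0∞) = 2 * 2 by norm_num, ← mul_assoc,
      ENNReal.inv_mul_cancel two_ne_zero ofNat_ne_top, one_mul]
  have hpow (j : ℕ) : (2 : ℝ≥0∞) ^ (j + 1) = 2 * 2⁻¹ ^ j * 4 ^ j := by
    rw [mul_assoc, ← mul_pow, h_half_four, pow_succ, mul_comm]
  calc ∑' j, 2 ^ (j + 1) * ∑' k, g (4 ^ j * (k + 1))
      = ∑' j, 2 * 2⁻¹ ^ j * ((4 ^ j : ℕ) * ∑' k, g (4 ^ j * (k + 1))) := by
        simp only [hpow, mul_assoc, Nat.cast_pow, Nat.cast_ofNat]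
    _ ≤ ∑' j, 2 * 2⁻¹ ^ j * ∑' n, g n := by
        gcongr with j
        exact mul_tsum_comp_mul_succ_le hg (by positivity)
    _ = 4 * ∑' n, g n := by
        rw [ENNReal.tsum_mul_right, ENNReal.tsum_mul_left, ENNReal.tsum_geometric,
          ENNReal.one_sub_inv_two, inv_inv]
        norm_num

theorem ofReal_sqrt_le_of_le_sq {x : ℝ} {y : ℝ≥0∞} (h : ENNReal.ofReal x ≤ y ^ 2) :
    ENNReal.ofReal √x ≤ y := by
  obtain rfl | hy := eq_or_ne y ⊤
  · exact le_top
  rw [← ENNReal.ofReal_toReal hy] at h ⊢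
  rw [← ENNReal.ofReal_pow toReal_nonneg, ENNReal.ofReal_le_ofReal_iff (by positivity)] at h
  exact ENNReal.ofReal_le_ofReal (Real.sqrt_le_iff.2 ⟨toReal_nonneg, h⟩)

theorem ofReal_tsum_le_tsum_ofReal {ι : Type*} {f : ι → ℝ} (hf : ∀ i, 0 ≤ f i) :
    ENNReal.ofReal (∑' i, f i) ≤ ∑' i, ENNReal.ofReal (f i) := by
  by_cases hs : Summable f
  · exact (ENNReal.ofReal_tsum_of_nonneg hf hs).le
  · simp [tsum_eq_zero_of_not_summable hs]

end ENNReal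

theorem ofReal_sqrt_tsum_nat_add_sq_div_le {τ : ℕ → ℝ} (hτ : ∀ k, 0 ≤ τ k) (hanti : Antitone τ)
    (k : ℕ) :
    ENNReal.ofReal √((∑' n, τ (k + 1 + n) ^ 2) / (k + 1))
      ≤ ∑' j, 2 ^ (j + 1) * ENNReal.ofReal (τ (4 ^ j * (k + 1))) := by
  refine ENNReal.ofReal_sqrt_le_of_le_sq ?_
  have hk : ENNReal.ofReal ((k : ℝ) + 1) = ((k + 1 : ℕ) : ℝ≥0∞) :=
    mod_cast ENNReal.ofReal_natCast (k + 1)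
  rw [ENNReal.ofReal_div_of_pos (by positivity), hk,
    ENNReal.div_le_iff (by positivity) (ENNReal.natCast_ne_top _), mul_comm]
  calc ENNReal.ofReal (∑' n, τ (k + 1 + n) ^ 2)
      ≤ ∑' n, ENNReal.ofReal (τ (k + 1 + n)) ^ 2 := by
        grw [ENNReal.ofReal_tsum_le_tsum_ofReal fun n => sq_nonneg _]
        simp only [ENNReal.ofReal_pow (hτ _), le_refl]
    _ ≤ _ := ENNReal.tsum_nat_add_sq_le_mul_sq_tsum
        (fun _ _ h => ENNReal.ofReal_le_ofReal (hanti h)) k.succ_ne_zero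

/-- Here `τsq k` denotes `τ_k²`; the claim is
`∑_{k≥1} √((∑_{n≥k} τ_n⁴)/k) ≤ C ∑_{k≥0} τ_k²`, stated in `ℝ≥0∞` to
incorporate the implicit summability. -/
theorem stmt13 :
    ∃ C : ℝ, 0 < C ∧
      ∀ τsq : ℕ → ℝ, (∀ k, 0 ≤ τsq k) → (∀ k, τsq (k + 1) ≤ τsq k) →
        ∑' k : ℕ, ENNReal.ofReal
            (Real.sqrt ((∑' n : ℕ, τsq (k + 1 + n) ^ 2) / (k + 1)))
          ≤ ENNReal.ofReal C * ∑' k : ℕ, ENNReal.ofReal (τsq k) := by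
  refine ⟨4, by norm_num, fun τsq hτ hτ_succ => ?_⟩
  have hanti : Antitone τsq := antitone_nat_of_succ_le hτ_succ
  calc ∑' k : ℕ, ENNReal.ofReal (√((∑' n : ℕ, τsq (k + 1 + n) ^ 2) / (k + 1)))
      ≤ ∑' k, ∑' j, 2 ^ (j + 1) * ENNReal.ofReal (τsq (4 ^ j * (k + 1))) :=
        ENNReal.tsum_le_tsum (ofReal_sqrt_tsum_nat_add_sq_div_le hτ hanti)
    _ = ∑' j, 2 ^ (j + 1) * ∑' k, ENNReal.ofReal (τsq (4 ^ j * (k + 1))) := by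
        rw [ENNReal.tsum_comm]; simp only [ENNReal.tsum_mul_left]
    _ ≤ 4 * ∑' k, ENNReal.ofReal (τsq k) :=
        ENNReal.tsum_two_pow_mul_tsum_le fun _ _ h => ENNReal.ofReal_le_ofReal (hanti h)
    _ = ENNReal.ofReal 4 * ∑' k, ENNReal.ofReal (τsq k) := by norm_num
end

section
/- Let A be a finite subset of positive integers, and let f(z) = (1/r) ∑_{(i,j) ∈ S} ζ_{i,j} z^{m_{i,j}} be a Gaussian polynomial where S has r² elements indexed by i,j ∈ {1,…,r}, ζ_{i,j} are i.i.d. standard complex Gaussians, and for each i the exponents satisfy n·2^i ≤ m_{i,j} ≤ n·2^i + n·4^{-r}. Then sup_{|z|<1} (1-|z|)|f'(z)| ≤ 2 max_{1≤i≤r} Θ_i, where Θ_i = (1/r) ∑_{j=1}^r |ζ_{i,j}|. -/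
/-! Bounding each coefficient `m z^(m-1)` by `(n 2^i + n 4^(-r)) t^(n 2^i - 1)`, with `t = ‖z‖`, and the
row sums by `r · max Θ`, reduces the claim to `(1-t) ∑ᵢ (n 2^i + n 4^(-r)) t^(n 2^i - 1) ≤ 2`.
Since `n 2^i` is twice the gap `n 2^i - n 2^(i-1)`, the dyadic part telescopes to at most
`2 (t^n - t^(n 2^r))`, and the `4^(-r)` part is at most `r 4^(-r) (1 - t^n) ≤ 1 - t^n`. -/

open Complex Finset

section DyadicSums

variable {t : ℝ}

/-- `t^a - t^b = (1-t) ∑_{a ≤ j < b} t^j`, and each of the `b - a` terms is at least `t^(b-1)`. -/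
lemma one_sub_mul_mul_pow_le_pow_sub_pow (h0 : 0 ≤ t) (h1 : t ≤ 1) {a b : ℕ} (hab : a ≤ b) :
    (1 - t) * ((b - a : ℕ) * t ^ (b - 1)) ≤ t ^ a - t ^ b := by
  have hterm : ∀ j ∈ Ico a b, t ^ (b - 1) ≤ t ^ j := fun j hj =>
    pow_le_pow_of_le_one h0 h1 (by have := (mem_Ico.1 hj).2; omega)
  calc (1 - t) * ((b - a : ℕ) * t ^ (b - 1))
      ≤ (1 - t) * ∑ j ∈ Ico a b, t ^ j :=
        mul_le_mul_of_nonneg_left (by simpa using card_nsmul_le_sum _ _ _ hterm) (by linarith)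
    _ = t ^ a - t ^ b := by rw [mul_comm, geom_sum_Ico_mul_neg t hab]

lemma one_sub_mul_sum_dyadic_le (h0 : 0 ≤ t) (h1 : t ≤ 1) (n r : ℕ) :
    (1 - t) * ∑ i ∈ Icc 1 r, (n : ℝ) * 2 ^ i * t ^ (n * 2 ^ i - 1) ≤
      2 * (t ^ n - t ^ (n * 2 ^ r)) := by
  induction r with
  | zero => simp
  | succ r ih =>
    have hdouble : n * 2 ^ (r + 1) = n * 2 ^ r + n * 2 ^ r := by ring
    have hstep := one_sub_mul_mul_pow_le_pow_sub_pow h0 h1 (a := n * 2 ^ r) (b := n * 2 ^ (r + 1))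
      (by omega)
    rw [hdouble, Nat.add_sub_cancel, ← hdouble] at hstep
    rw [sum_Icc_succ_top (by omega), mul_add]
    push_cast at hstep
    linarith [show (1 - t) * ((n : ℝ) * 2 ^ (r + 1) * t ^ (n * 2 ^ (r + 1) - 1)) =
      2 * ((1 - t) * (n * 2 ^ r * t ^ (n * 2 ^ (r + 1) - 1))) by ring]

lemma one_sub_mul_sum_const_le (h0 : 0 ≤ t) (h1 : t ≤ 1) (n r : ℕ) {c : ℝ} (hc : 0 ≤ c) :
    (1 - t) * ∑ i ∈ Icc 1 r, (n : ℝ) * c * t ^ (n * 2 ^ i - 1) ≤ r * c * (1 - t ^ n) := by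
  have hterm : ∀ i ∈ Icc 1 r, (1 - t) * ((n : ℝ) * c * t ^ (n * 2 ^ i - 1)) ≤ c * (1 - t ^ n) := by
    intro i _
    have hpow : t ^ (n * 2 ^ i - 1) ≤ t ^ (n - 1) :=
      pow_le_pow_of_le_one h0 h1 (Nat.sub_le_sub_right (Nat.le_mul_of_pos_right n (by positivity)) 1)
    have hbase := one_sub_mul_mul_pow_le_pow_sub_pow h0 h1 (Nat.zero_le n)
    simp only [Nat.sub_zero, pow_zero] at hbase
    calc (1 - t) * ((n : ℝ) * c * t ^ (n * 2 ^ i - 1))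
        = c * ((1 - t) * (n * t ^ (n * 2 ^ i - 1))) := by ring
      _ ≤ c * ((1 - t) * (n * t ^ (n - 1))) := by gcongr
      _ ≤ c * (1 - t ^ n) := mul_le_mul_of_nonneg_left hbase hc
  calc (1 - t) * ∑ i ∈ Icc 1 r, (n : ℝ) * c * t ^ (n * 2 ^ i - 1)
      ≤ ∑ _i ∈ Icc 1 r, c * (1 - t ^ n) := by rw [mul_sum]; exact sum_le_sum hterm
    _ = r * c * (1 - t ^ n) := by simp [mul_assoc]

lemma one_sub_mul_sum_le_two (h0 : 0 ≤ t) (h1 : t ≤ 1) (n r : ℕ) {c : ℝ} (hc : 0 ≤ c)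
    (hrc : r * c ≤ 1) :
    (1 - t) * ∑ i ∈ Icc 1 r, ((n : ℝ) * 2 ^ i + n * c) * t ^ (n * 2 ^ i - 1) ≤ 2 := by
  have hdyadic := one_sub_mul_sum_dyadic_le h0 h1 n r
  have hconst := one_sub_mul_sum_const_le h0 h1 n r hc
  have htn : t ^ n ≤ 1 := pow_le_one₀ h0 h1
  have hsplit : (1 - t) * ∑ i ∈ Icc 1 r, ((n : ℝ) * 2 ^ i + n * c) * t ^ (n * 2 ^ i - 1) =
      (1 - t) * ∑ i ∈ Icc 1 r, (n : ℝ) * 2 ^ i * t ^ (n * 2 ^ i - 1) +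
        (1 - t) * ∑ i ∈ Icc 1 r, (n : ℝ) * c * t ^ (n * 2 ^ i - 1) := by
    rw [← mul_add, ← sum_add_distrib]; simp only [add_mul]
  have hconst_le : r * c * (1 - t ^ n) ≤ 1 - t ^ n := mul_le_of_le_one_left (sub_nonneg.2 htn) hrc
  rw [hsplit]
  linarith [pow_nonneg h0 (n * 2 ^ r)]

end DyadicSums

lemma natCast_mul_four_rpow_neg_le_one (r : ℕ) : r * (4 : ℝ) ^ (-(r : ℝ)) ≤ 1 := by
  rw [Real.rpow_neg (by norm_num), Real.rpow_natCast, ← div_eq_mul_inv,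
    div_le_one (by positivity)]
  exact_mod_cast (Nat.lt_pow_self (by norm_num : 1 < 4)).le

lemma norm_mul_sum_sum_le {ι κ : Type*} (s : Finset ι) (hs : s.Nonempty) (u : Finset κ)
    (a : ι → κ → ℂ) (w : ι → κ → ℝ) (B : ι → ℝ) (hB : ∀ i ∈ s, 0 ≤ B i)
    (ha : ∀ i ∈ s, ∀ j ∈ u, ‖a i j‖ ≤ w i j * B i) {c : ℝ} (hc : 0 ≤ c) :
    ‖(c : ℂ) * ∑ i ∈ s, ∑ j ∈ u, a i j‖ ≤
      s.sup' hs (fun i => c * ∑ j ∈ u, w i j) * ∑ i ∈ s, B i := by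
  have hrow : ∀ i ∈ s, c * ‖∑ j ∈ u, a i j‖ ≤ s.sup' hs (fun i => c * ∑ j ∈ u, w i j) * B i :=
    fun i hi => calc
      c * ‖∑ j ∈ u, a i j‖ ≤ (c * ∑ j ∈ u, w i j) * B i := by
        rw [mul_assoc, sum_mul]
        exact mul_le_mul_of_nonneg_left ((norm_sum_le _ _).trans (sum_le_sum (ha i hi))) hc
      _ ≤ _ := mul_le_mul_of_nonneg_right (le_sup' (fun i => c * ∑ j ∈ u, w i j) hi) (hB i hi)
  calc ‖(c : ℂ) * ∑ i ∈ s, ∑ j ∈ u, a i j‖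
      ≤ c * ∑ i ∈ s, ‖∑ j ∈ u, a i j‖ := by
        rw [norm_mul, norm_real, Real.norm_of_nonneg hc]
        exact mul_le_mul_of_nonneg_left (norm_sum_le _ _) hc
    _ ≤ _ := by rw [mul_sum, mul_sum]; exact sum_le_sum hrow

lemma norm_natCast_mul_pow_pred_le {z : ℂ} (hz : ‖z‖ ≤ 1) {k m : ℕ} {L : ℝ} (hkm : k ≤ m)
    (hmL : (m : ℝ) ≤ L) : ‖(m : ℂ) * z ^ (m - 1)‖ ≤ L * ‖z‖ ^ (k - 1) := by
  rw [norm_mul, norm_natCast, norm_pow]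
  exact mul_le_mul hmL (pow_le_pow_of_le_one (norm_nonneg z) hz (by omega)) (by positivity)
    ((Nat.cast_nonneg m).trans hmL)

theorem stmt18_general (r n : ℕ) (hr : 1 ≤ r)
    (m : ℕ → ℕ → ℕ) (ζ : ℕ → ℕ → ℂ)
    (hm : ∀ i ∈ Finset.Icc 1 r, ∀ j ∈ Finset.Icc 1 r,
      (n : ℝ) * 2 ^ i ≤ (m i j : ℝ) ∧
      (m i j : ℝ) ≤ (n : ℝ) * 2 ^ i + (n : ℝ) * (4 : ℝ) ^ (-(r : ℝ))) :
    ∀ z : ℂ, ‖z‖ < 1 →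
      (1 - ‖z‖) *
        ‖(1 / r : ℂ) * ∑ i ∈ Finset.Icc 1 r, ∑ j ∈ Finset.Icc 1 r,
          ζ i j * (m i j : ℂ) * z ^ (m i j - 1)‖ ≤
        2 * (Finset.Icc 1 r).sup' (Finset.nonempty_Icc.2 hr)
          (fun i => (1 / r : ℝ) * ∑ j ∈ Finset.Icc 1 r, ‖ζ i j‖) := by
  intro z hz
  set c : ℝ := (4 : ℝ) ^ (-(r : ℝ))
  set B : ℕ → ℝ := fun i => ((n : ℝ) * 2 ^ i + n * c) * ‖z‖ ^ (n * 2 ^ i - 1)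
  set M := (Icc 1 r).sup' (nonempty_Icc.2 hr) (fun i => (1 / r : ℝ) * ∑ j ∈ Icc 1 r, ‖ζ i j‖)
  have hterm : ∀ i ∈ Icc 1 r, ∀ j ∈ Icc 1 r,
      ‖ζ i j * (m i j : ℂ) * z ^ (m i j - 1)‖ ≤ ‖ζ i j‖ * B i := by
    intro i hi j hj
    obtain ⟨hlo, hhi⟩ := hm i hi j hj
    rw [mul_assoc, norm_mul]
    exact mul_le_mul_of_nonneg_left (norm_natCast_mul_pow_pred_le hz.le
      (by exact_mod_cast hlo) hhi) (norm_nonneg _)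
  have hf' := norm_mul_sum_sum_le _ (nonempty_Icc.2 hr) _ _ _ B (fun i _ => by positivity) hterm
    (by positivity : (0 : ℝ) ≤ 1 / r)
  have hM : 0 ≤ M := le_sup'_of_le _ (left_mem_Icc.2 hr) (by positivity)
  have hsum := one_sub_mul_sum_le_two (norm_nonneg z) hz.le n r (by positivity)
    (natCast_mul_four_rpow_neg_le_one r)
  push_cast at hf'
  calc _ ≤ (1 - ‖z‖) * (M * ∑ i ∈ Icc 1 r, B i) := by gcongr
    _ = M * ((1 - ‖z‖) * ∑ i ∈ Icc 1 r, B i) := by ring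
    _ ≤ M * 2 := mul_le_mul_of_nonneg_left hsum hM
    _ = 2 * M := mul_comm M 2

/-- Deterministic Bloch-norm bound: if `f(z) = (1/r) ∑_{i,j=1}^r ζ_{i,j} z^{m_{i,j}}`
with exponents `n·2^i ≤ m_{i,j} ≤ n·2^i + n·4^{-r}`, then
`(1-|z|)|f'(z)| ≤ 2 max_i Θ_i` where `Θ_i = (1/r) ∑_j |ζ_{i,j}|`. -/
theorem stmt18 (r n : ℕ) (hr : 1 ≤ r) (hn : 1 ≤ n)
    (m : ℕ → ℕ → ℕ) (ζ : ℕ → ℕ → ℂ)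
    (hm : ∀ i ∈ Finset.Icc 1 r, ∀ j ∈ Finset.Icc 1 r,
      (n : ℝ) * 2 ^ i ≤ (m i j : ℝ) ∧
      (m i j : ℝ) ≤ (n : ℝ) * 2 ^ i + (n : ℝ) * (4 : ℝ) ^ (-(r : ℝ))) :
    ∀ z : ℂ, ‖z‖ < 1 →
      (1 - ‖z‖) *
        ‖(1 / r : ℂ) * ∑ i ∈ Finset.Icc 1 r, ∑ j ∈ Finset.Icc 1 r,
          ζ i j * (m i j : ℂ) * z ^ (m i j - 1)‖ ≤
        2 * (Finset.Icc 1 r).sup' (Finset.nonempty_Icc.2 hr)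
          (fun i => (1 / r : ℝ) * ∑ j ∈ Finset.Icc 1 r, ‖ζ i j‖) :=
  stmt18_general r n hr m ζ hm
end
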